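/- Under the Gaussian model setup, lim_{n→∞} g_n = 2W Σ_{j : μ(j) > 0} μ(j) H(ε/μ(j) − 1), where H is the Heaviside step function (H(x) = 1 for x > 0, H(x) = 1/2 for x = 0, H(x) = 0 for x < 0). -/

import Mathlib

open Real MeasureTheory ProbabilityTheory Filter Topology

/-- Generalization gap `g_n = W · E[⟨sign(u) − sign(u − ε·sign(u)), μ⟩]` in the Gaussian
model, where `u` has independent coordinates `u(j) ~ N(μ(j), σ(j)²/n)`. -/
noncomputable def gaussGap (d : ℕ) (W ε : ℝ) (μ σ : Fin d → ℝ) (n : ℕ) : ℝ :=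
  W * ∫ u : Fin d → ℝ,
      (∑ j, (Real.sign (u j) - Real.sign (u j - ε * Real.sign (u j))) * μ j)
    ∂(Measure.pi fun j => gaussianReal (μ j) (Real.toNNReal ((σ j) ^ 2 / n)))

/-- The Heaviside step function. -/
noncomputable def heaviside (x : ℝ) : ℝ := if 0 < x then 1 else if x = 0 then 1/2 else 0


/-! Coordinatewise, `g_n` is a weighted sum of `E[φ(u)]` with
`φ(u) = sign u - sign (u - ε sign u)` and `u ~ N(m, s²/n)`, `m > 0`. Near `m`, `φ` equals
`1 - sign (u - ε)`: it is `2` below `ε` and `0` above. Writing `u = m + (s/√n) Z` with `Z`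
standard normal, dominated convergence gives the limit `a P(Z > 0) + b P(Z < 0) = (a + b) / 2`,
where `a`, `b` are the one-sided limits of `φ` at `m`. This is `2 H(ε/m - 1)`; at `m = ε` the
value `1 = 2 H(0)` comes from the symmetry of `Z`. -/

open scoped NNReal

namespace Real

theorem measurable_sign : Measurable Real.sign :=
  Measurable.ite (measurableSet_lt measurable_id measurable_const) measurable_const <|
    Measurable.ite (measurableSet_lt measurable_const measurable_id) measurable_const
      measurable_const

theorem abs_sign_le_one (x : ℝ) : |Real.sign x| ≤ 1 := by
  rcases Real.sign_apply_eq x with h | h | h <;> simp [h]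

end Real

theorem integral_sign_gaussianReal_zero (v : ℝ≥0) :
    ∫ x, Real.sign x ∂gaussianReal 0 v = 0 := by
  have h : ∫ x, Real.sign x ∂gaussianReal 0 v = ∫ x, Real.sign (-x) ∂gaussianReal 0 v := by
    conv_lhs => rw [← neg_zero, ← gaussianReal_map_neg]
    exact integral_map measurable_neg.aemeasurable Real.measurable_sign.aestronglyMeasurable
  simp only [Real.sign_neg, integral_neg] at h
  linarith

theorem gaussianReal_eq_map_standard (m : ℝ) (v : ℝ≥0) :
    gaussianReal m v = (gaussianReal 0 1).map (fun x => m + √(v : ℝ) * x) := by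
  calc gaussianReal m v = ((gaussianReal 0 1).map (√(v : ℝ) * ·)).map (m + ·) := by
        rw [gaussianReal_map_const_mul, gaussianReal_map_const_add]
        congr 1
        · ring
        · ext; simp
    _ = _ := Measure.map_map (by fun_prop) (by fun_prop)

theorem integral_gaussianReal_eq_integral_standard {E : Type*} [NormedAddCommGroup E]
    [NormedSpace ℝ E] {f : ℝ → E} (m : ℝ) (v : ℝ≥0)
    (hf : AEStronglyMeasurable f (gaussianReal m v)) :
    ∫ x, f x ∂gaussianReal m v = ∫ x, f (m + √(v : ℝ) * x) ∂gaussianReal 0 1 := by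
  rw [gaussianReal_eq_map_standard] at hf ⊢
  exact integral_map (by fun_prop) hf

theorem tendsto_sqrt_coe_nhdsGT_zero {ι : Type*} {l : Filter ι} {v : ι → ℝ≥0}
    (hv : Tendsto v l (𝓝[>] 0)) : Tendsto (fun i => √(v i : ℝ)) l (𝓝[>] 0) := by
  obtain ⟨hv₀, hv_pos⟩ := tendsto_nhdsWithin_iff.1 hv
  refine tendsto_nhdsWithin_iff.2
    ⟨?_, hv_pos.mono fun i hi => Real.sqrt_pos.2 (by exact_mod_cast hi)⟩
  simpa [Function.comp_def] using
    (Real.continuous_sqrt.tendsto 0).comp ((NNReal.continuous_coe.tendsto 0).comp hv₀)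

theorem tendsto_integral_gaussianReal_of_tendsto_nhdsGT_nhdsLT {ι : Type*} {l : Filter ι}
    [l.IsCountablyGenerated] {f : ℝ → ℝ} {m a b C : ℝ} {v : ι → ℝ≥0}
    (hf : Measurable f) (hfC : ∀ x, |f x| ≤ C)
    (ha : Tendsto f (𝓝[>] m) (𝓝 a)) (hb : Tendsto f (𝓝[<] m) (𝓝 b))
    (hv : Tendsto v l (𝓝[>] 0)) :
    Tendsto (fun i => ∫ x, f x ∂gaussianReal m (v i)) l (𝓝 ((a + b) / 2)) := by
  obtain ⟨hsqrt, hsqrt_pos⟩ := tendsto_nhdsWithin_iff.1 (tendsto_sqrt_coe_nhdsGT_zero hv)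
  have hshift (x : ℝ) : Tendsto (fun i => m + √(v i : ℝ) * x) l (𝓝 m) := by
    simpa using tendsto_const_nhds.add (hsqrt.mul_const x)
  have hright {x : ℝ} (hx : 0 < x) : Tendsto (fun i => m + √(v i : ℝ) * x) l (𝓝[>] m) :=
    tendsto_nhdsWithin_iff.2
      ⟨hshift x, hsqrt_pos.mono fun _ hi => lt_add_of_pos_right m (mul_pos hi hx)⟩
  have hleft {x : ℝ} (hx : x < 0) : Tendsto (fun i => m + √(v i : ℝ) * x) l (𝓝[<] m) :=
    tendsto_nhdsWithin_iff.2
      ⟨hshift x, hsqrt_pos.mono fun _ hi =>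
        add_lt_of_neg_right m (mul_neg_of_pos_of_neg hi hx)⟩
  -- the pointwise limit, `a` on `x > 0` and `b` on `x < 0`, has mean `(a + b) / 2` by symmetry
  have hmean :
      ∫ x, ((a + b) / 2 + (a - b) / 2 * Real.sign x) ∂gaussianReal 0 1 = (a + b) / 2 := by
    have hsign : Integrable Real.sign (gaussianReal 0 1) := .of_bound
      Real.measurable_sign.aestronglyMeasurable 1 (ae_of_all _ Real.abs_sign_le_one)
    rw [integral_add (integrable_const _) (hsign.const_mul _), integral_const_mul,
      integral_sign_gaussianReal_zero]
    simp
  simp_rw [integral_gaussianReal_eq_integral_standard _ _ hf.aestronglyMeasurable]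
  rw [← hmean]
  have := nullSingletonClass_gaussianReal (μ := 0) one_ne_zero
  refine tendsto_integral_filter_of_dominated_convergence (fun _ => C)
    (Eventually.of_forall fun i => (hf.comp (by fun_prop)).aestronglyMeasurable)
    (Eventually.of_forall fun i => ae_of_all _ fun x => hfC _) (integrable_const C) ?_
  filter_upwards [(gaussianReal 0 1).ae_ne 0] with x hx
  rcases hx.lt_or_gt with hneg | hpos
  · rw [Real.sign_of_neg hneg, show (a + b) / 2 + (a - b) / 2 * -1 = b by ring]
    exact hb.comp (hleft hneg)
  · rw [Real.sign_of_pos hpos, show (a + b) / 2 + (a - b) / 2 * 1 = a by ring]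
    exact ha.comp (hright hpos)

theorem tendsto_toNNReal_div_natCast_nhdsGT_zero {s : ℝ} (hs : 0 < s) :
    Tendsto (fun n : ℕ => (s / n).toNNReal) atTop (𝓝[>] 0) :=
  tendsto_nhdsWithin_iff.2
    ⟨by simpa [Function.comp_def] using
        (continuous_real_toNNReal.tendsto 0).comp (tendsto_const_div_atTop_nhds_zero_nat s),
      (eventually_gt_atTop 0).mono fun n hn => by simp only [Set.mem_Ioi]; positivity⟩

theorem integral_pi_sum_comp_eval {ι : Type*} [Fintype ι] {X : ι → Type*}
    [∀ i, MeasurableSpace (X i)] {μ : ∀ i, Measure (X i)} [∀ i, IsProbabilityMeasure (μ i)]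
    {E : Type*} [NormedAddCommGroup E] [NormedSpace ℝ E] {f : ∀ i, X i → E}
    (hf : ∀ i, Integrable (f i) (μ i)) :
    ∫ x, ∑ i, f i (x i) ∂Measure.pi μ = ∑ i, ∫ x, f i x ∂μ i := by
  rw [integral_finsetSum _ fun i _ => integrable_comp_eval (hf i)]
  exact Finset.sum_congr rfl fun i _ => integral_comp_eval (hf i).aestronglyMeasurable

noncomputable def robustSignGap (ε u : ℝ) : ℝ := Real.sign u - Real.sign (u - ε * Real.sign u)

theorem measurable_robustSignGap (ε : ℝ) : Measurable (robustSignGap ε) :=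
  Real.measurable_sign.sub
    (Real.measurable_sign.comp (measurable_id.sub (Real.measurable_sign.const_mul ε)))

theorem abs_robustSignGap_le (ε u : ℝ) : |robustSignGap ε u| ≤ 2 :=
  (abs_sub _ _).trans <| by
    linarith [Real.abs_sign_le_one u, Real.abs_sign_le_one (u - ε * Real.sign u)]

theorem robustSignGap_eq_two {ε u : ℝ} (hu : 0 < u) (huε : u < ε) :
    robustSignGap ε u = 2 := by
  rw [robustSignGap, Real.sign_of_pos hu, mul_one, Real.sign_of_neg (by linarith)]
  norm_num

theorem robustSignGap_eq_zero {ε u : ℝ} (hu : 0 < u) (hεu : ε < u) :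
    robustSignGap ε u = 0 := by
  rw [robustSignGap, Real.sign_of_pos hu, mul_one, Real.sign_of_pos (by linarith), sub_self]

theorem heaviside_div_sub_one (ε : ℝ) {m : ℝ} (hm : 0 < m) :
    heaviside (ε / m - 1) = heaviside (ε - m) := by
  simp only [heaviside, div_sub_one hm.ne', div_pos_iff_of_pos_right hm, div_eq_zero_iff,
    hm.ne', or_false]

theorem tendsto_integral_robustSignGap_gaussianReal {ι : Type*} {l : Filter ι}
    [l.IsCountablyGenerated] (ε : ℝ) {m : ℝ} (hm : 0 < m) {v : ι → ℝ≥0}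
    (hv : Tendsto v l (𝓝[>] 0)) :
    Tendsto (fun i => ∫ u, robustSignGap ε u ∂gaussianReal m (v i)) l
      (𝓝 (2 * heaviside (ε / m - 1))) := by
  have hconst {F : Filter ℝ} {s : Set ℝ} {c : ℝ} (hs : s ∈ F)
      (h : Set.EqOn (robustSignGap ε) (fun _ => c) s) : Tendsto (robustSignGap ε) F (𝓝 c) :=
    tendsto_const_nhds.congr' (eventually_of_mem hs fun u hu => (h hu).symm)
  have key {a b : ℝ} (ha : Tendsto (robustSignGap ε) (𝓝[>] m) (𝓝 a))
      (hb : Tendsto (robustSignGap ε) (𝓝[<] m) (𝓝 b)) :=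
    tendsto_integral_gaussianReal_of_tendsto_nhdsGT_nhdsLT (measurable_robustSignGap ε)
      (abs_robustSignGap_le ε) ha hb hv
  rw [heaviside_div_sub_one ε hm]
  rcases lt_trichotomy m ε with hlt | rfl | hgt
  · have h2 : Tendsto (robustSignGap ε) (𝓝 m) (𝓝 2) :=
      hconst (Ioo_mem_nhds hm hlt) fun u hu => robustSignGap_eq_two hu.1 hu.2
    convert key (h2.mono_left nhdsWithin_le_nhds) (h2.mono_left nhdsWithin_le_nhds) using 2
    simp [heaviside, hlt]
  · convert key (hconst self_mem_nhdsWithin fun u hu => robustSignGap_eq_zero (hm.trans hu) hu)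
      (hconst (Ioo_mem_nhdsLT hm) fun u hu => robustSignGap_eq_two hu.1 hu.2) using 2
    simp [heaviside]
  · have h0 : Tendsto (robustSignGap ε) (𝓝 m) (𝓝 0) :=
      hconst (inter_mem (Ioi_mem_nhds hm) (Ioi_mem_nhds hgt))
        fun u hu => robustSignGap_eq_zero hu.1 hu.2
    convert key (h0.mono_left nhdsWithin_le_nhds) (h0.mono_left nhdsWithin_le_nhds) using 2
    simp [heaviside, hgt.not_gt, sub_eq_zero, hgt.ne]

theorem gaussGap_eq_sum (d : ℕ) (W ε : ℝ) (μ σ : Fin d → ℝ) (n : ℕ) :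
    gaussGap d W ε μ σ n = W * ∑ j, μ j *
      ∫ u, robustSignGap ε u ∂gaussianReal (μ j) ((σ j) ^ 2 / n).toNNReal := by
  have hint (j : Fin d) : Integrable (fun u => μ j * robustSignGap ε u)
      (gaussianReal (μ j) ((σ j) ^ 2 / n).toNNReal) :=
    ((Integrable.of_bound (measurable_robustSignGap ε).aestronglyMeasurable 2
      (ae_of_all _ (abs_robustSignGap_le ε))).const_mul (μ j))
  simp_rw [← integral_const_mul, ← integral_pi_sum_comp_eval hint, gaussGap, robustSignGap,
    mul_comm (μ _)]

theorem gaussGap_limit_general (d : ℕ) (W ε : ℝ) (μ σ : Fin d → ℝ)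
    (hμ : ∀ j, 0 ≤ μ j) (hσ : ∀ j, 0 < σ j) :
    Tendsto (fun n : ℕ => gaussGap d W ε μ σ n) atTop
      (𝓝 (2 * W * ∑ j ∈ Finset.univ.filter (fun j => 0 < μ j),
        μ j * heaviside (ε / μ j - 1))) := by
  have hsupp (n : ℕ) : gaussGap d W ε μ σ n =
      W * ∑ j ∈ Finset.univ.filter (fun j => 0 < μ j),
        μ j * ∫ u, robustSignGap ε u ∂gaussianReal (μ j) ((σ j) ^ 2 / n).toNNReal := by
    rw [gaussGap_eq_sum, Finset.sum_filter_of_ne fun j _ hj =>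
      (hμ j).lt_of_ne' (left_ne_zero_of_mul hj)]
  have hlim := (tendsto_finsetSum (Finset.univ.filter fun j => 0 < μ j) fun j hj =>
    (tendsto_integral_robustSignGap_gaussianReal ε (Finset.mem_filter.1 hj).2
      (tendsto_toNNReal_div_natCast_nhdsGT_zero (pow_pos (hσ j) 2))).const_mul (μ j))
  simp_rw [hsupp]
  convert hlim.const_mul W using 2
  simp only [Finset.mul_sum]
  exact Finset.sum_congr rfl fun _ _ => by ring

theorem gaussGap_limit (d : ℕ) (W ε : ℝ) (μ σ : Fin d → ℝ)
    (hW : 0 < W) (hε : 0 < ε) (hμ : ∀ j, 0 ≤ μ j) (hσ : ∀ j, 0 < σ j) :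
    Tendsto (fun n : ℕ => gaussGap d W ε μ σ n) atTop
      (𝓝 (2 * W * ∑ j ∈ Finset.univ.filter (fun j => 0 < μ j),
        μ j * heaviside (ε / μ j - 1))) :=
  gaussGap_limit_general d W ε μ σ hμ hσ
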